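/- arXiv:gr-qc/0402124 — 2 statements merged into one kernel-verified Lean document; each statement's English description precedes it below -/
import Mathlib

section
/- Let F, G : ℝ → ℝ be positive measurable functions and suppose F^{-2} is not locally integrable at some point u₁ ∈ ℝ (i.e., ∫ over some interval ending at u₁ of F^{-2} diverges). Then there exists a geodesic of the metric ds² = -2 du dv + F(u)² dy² + G(u)² dz² (given by the quadratures with constants V ≠ 0, Y ≠ 0) along which the coordinate v(τ) diverges as u(τ) → u₁, i.e., v is not extendible past the finite affine parameter value τ₁ = (u₀ - u₁)/V as a finite-valued solution. -/
open MeasureTheory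

/-! With `V = -1`, `Y = 1`, `Z = δ = 0` and `u₀ = a` the geodesic runs along `u = a + τ`, so the
`v`-quadrature integrand is `F(a + τ)⁻² / 2` and reaches `u₁` at `τ₁ = u₁ - a`; a translate of
a function not integrable on `(a, u₁)` is not integrable on `(0, u₁ - a)`. -/

theorem not_intervalIntegrable_comp_add_of_not_integrableOn {E : Type*} [NormedAddCommGroup E]
    {f : ℝ → E} {a b : ℝ} (hab : a ≤ b) (hf : ¬ IntegrableOn f (Set.Ioo a b)) :
    ¬ IntervalIntegrable (fun s => f (a + s)) volume 0 (b - a) := by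
  intro h
  rw [← sub_self a, IntervalIntegrable.comp_add_left_iff,
    intervalIntegrable_iff_integrableOn_Ioc_of_le hab] at h
  exact hf (h.mono_set Set.Ioo_subset_Ioc_self)

theorem plane_wave_incomplete_of_nonintegrable_general (F G : ℝ → ℝ) (u₁ : ℝ)
    (hdiv : ∃ a : ℝ, a < u₁ ∧
      ¬ IntegrableOn (fun u : ℝ => ((F u) ^ 2)⁻¹) (Set.Ioo a u₁) volume) :
    ∃ V Y Z δ u₀ : ℝ, V ≠ 0 ∧ Y ≠ 0 ∧ 0 < (u₀ - u₁) / V ∧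
      ¬ IntervalIntegrable (fun s : ℝ =>
        (1 / (2 * V ^ 2)) * (δ + Y ^ 2 * ((F (u₀ - V * s)) ^ 2)⁻¹
          + Z ^ 2 * ((G (u₀ - V * s)) ^ 2)⁻¹)) volume 0 ((u₀ - u₁) / V) := by
  obtain ⟨a, ha, hnint⟩ := hdiv
  have hτ₁ : (a - u₁) / (-1) = u₁ - a := by ring
  refine ⟨-1, 1, 0, 0, a, by norm_num, one_ne_zero, by rw [hτ₁]; linarith, ?_⟩
  rw [hτ₁]
  intro h
  refine not_intervalIntegrable_comp_add_of_not_integrableOn ha.le hnint ?_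
  refine (h.const_mul 2).congr fun s _ => ?_
  simp only [sub_neg_eq_add, neg_mul, one_mul]
  ring

/-- If `F^{-2}` fails to be integrable on some interval ending at `u₁`, then there is a
geodesic of the plane-wave metric (with constants `V ≠ 0`, `Y ≠ 0`) whose coordinate `v`
is not a finite-valued solution up to the finite affine parameter `τ₁ = (u₀ - u₁)/V`:
the `v`-quadrature integrand is not interval integrable from `0` to `τ₁`. -/
theorem plane_wave_incomplete_of_nonintegrable (F G : ℝ → ℝ)
    (hFpos : ∀ u : ℝ, 0 < F u) (hGpos : ∀ u : ℝ, 0 < G u)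
    (hFm : Measurable F) (hGm : Measurable G) (u₁ : ℝ)
    (hdiv : ∃ a : ℝ, a < u₁ ∧
      ¬ IntegrableOn (fun u : ℝ => ((F u) ^ 2)⁻¹) (Set.Ioo a u₁) volume) :
    ∃ V Y Z δ u₀ : ℝ, V ≠ 0 ∧ Y ≠ 0 ∧ 0 < (u₀ - u₁) / V ∧
      ¬ IntervalIntegrable (fun s : ℝ =>
        (1 / (2 * V ^ 2)) * (δ + Y ^ 2 * ((F (u₀ - V * s)) ^ 2)⁻¹
          + Z ^ 2 * ((G (u₀ - V * s)) ^ 2)⁻¹)) volume 0 ((u₀ - u₁) / V) :=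
  plane_wave_incomplete_of_nonintegrable_general F G u₁ hdiv
end

section
/- Let f(x) = Σ_{i=0}^m a_i x^i and g(x) = Σ_{j=0}^n b_j x^j be polynomials with a_m > 0, and define U(t,0) = ∫_0^1 (τ/√(1-τ²)) [ t g(|t|τ) + f(|t|τ) + |t|τ f'(|t|τ) ] dτ. If m > n + 1, then U(t,0) → +∞ as |t| → ∞; in particular, for every constant b there exists T such that U(t,0) ≥ b - (1/2) ln|t| for all |t| ≥ T. -/
/-!
Expanding `f` and `g` gives `U(t,0) = P(|t|) + t Q(|t|)` with `P = ∑ (i+1) aᵢ μᵢ Xⁱ` and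
`Q = ∑ cⱼ μⱼ Xʲ`, where `μₖ = axisMoment k = ∫₀¹ τᵏ⁺¹/√(1-τ²) > 0`; the factor `i+1` comes from
`f(x) + x f'(x) = (x f(x))'`. Hence `U(t,0) ≥ P(|t|) - |(X Q)(|t|)|`, and since
`deg (X Q) ≤ n + 1 < m = deg P` with positive leading coefficient, the right-hand side tends to
`+∞`. For `|t| ≥ 1` the logarithmic term only helps.
-/

open Filter Polynomial Finset Asymptotics intervalIntegral

theorem intervalIntegrable_div_sqrt_one_sub_sq :
    IntervalIntegrable (fun τ : ℝ => τ / √(1 - τ ^ 2)) MeasureTheory.volume 0 1 := by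
  apply intervalIntegrable_deriv_of_nonneg (g := fun τ : ℝ => -√(1 - τ ^ 2)) (by fun_prop)
  · intro x hx
    rw [min_eq_left zero_le_one, max_eq_right zero_le_one] at hx
    have hx2 : 0 < 1 - x ^ 2 := by nlinarith [hx.1, hx.2]
    refine ((Real.hasDerivAt_sqrt hx2.ne').comp x
      ((hasDerivAt_pow 2 x).const_sub 1)).neg.congr_deriv ?_
    field_simp
    ring
  · intro x hx
    rw [min_eq_left zero_le_one, max_eq_right zero_le_one] at hx
    exact div_nonneg hx.1.le (Real.sqrt_nonneg _)

noncomputable def axisMoment (k : ℕ) : ℝ := ∫ τ in (0:ℝ)..1, τ / √(1 - τ ^ 2) * τ ^ k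

theorem axisMoment_pos (k : ℕ) : 0 < axisMoment k := by
  refine intervalIntegral_pos_of_pos_on
    (intervalIntegrable_div_sqrt_one_sub_sq.mul_continuousOn (by fun_prop)) (fun x hx => ?_) one_pos
  have hx2 : 0 < 1 - x ^ 2 := by nlinarith [hx.1, hx.2]
  exact mul_pos (div_pos hx.1 (Real.sqrt_pos.2 hx2)) (pow_pos hx.1 k)

theorem integral_div_sqrt_one_sub_sq_mul_sum (s : Finset ℕ) (b : ℕ → ℝ) (r : ℝ) :
    ∫ τ in (0:ℝ)..1, τ / √(1 - τ ^ 2) * ∑ i ∈ s, b i * (r * τ) ^ i =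
      ∑ i ∈ s, b i * axisMoment i * r ^ i := by
  have hterm : ∀ i ∈ s, IntervalIntegrable
      (fun τ : ℝ => b i * r ^ i * (τ / √(1 - τ ^ 2) * τ ^ i)) MeasureTheory.volume 0 1 :=
    fun i _ => (intervalIntegrable_div_sqrt_one_sub_sq.mul_continuousOn (by fun_prop)).const_mul _
  have hpt : ∀ τ : ℝ, τ / √(1 - τ ^ 2) * ∑ i ∈ s, b i * (r * τ) ^ i =
      ∑ i ∈ s, b i * r ^ i * (τ / √(1 - τ ^ 2) * τ ^ i) := fun τ => by
    rw [mul_sum]; congr! 1 with i; ring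
  simp_rw [hpt]
  rw [integral_finsetSum hterm]
  refine sum_congr rfl fun i _ => ?_
  rw [integral_const_mul, axisMoment]
  ring

theorem sum_mul_pow_add_mul_deriv (s : Finset ℕ) (a : ℕ → ℝ) (x : ℝ) :
    ∑ i ∈ s, a i * x ^ i + x * deriv (fun y => ∑ i ∈ s, a i * y ^ i) x =
      ∑ i ∈ s, a i * (i + 1) * x ^ i := by
  have hprod : HasDerivAt (fun y => y * ∑ i ∈ s, a i * y ^ i)
      (1 * ∑ i ∈ s, a i * x ^ i + x * deriv (fun y => ∑ i ∈ s, a i * y ^ i) x) x :=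
    (hasDerivAt_id x).mul (by fun_prop : DifferentiableAt ℝ _ x).hasDerivAt
  have hpow : HasDerivAt (fun y => y * ∑ i ∈ s, a i * y ^ i)
      (∑ i ∈ s, a i * (i + 1) * x ^ i) x := by
    have hfun : (fun y => y * ∑ i ∈ s, a i * y ^ i) = fun y => ∑ i ∈ s, a i * y ^ (i + 1) := by
      ext y; rw [mul_sum]; congr! 1 with i; ring
    rw [hfun]
    refine (HasDerivAt.fun_sum fun i _ => (hasDerivAt_pow (i + 1) x).const_mul (a i)).congr_deriv ?_
    push_cast
    simp only [mul_assoc]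
  rw [← one_mul (∑ i ∈ s, a i * x ^ i)]
  exact hprod.unique hpow

namespace Polynomial

variable {R : Type*} [Semiring R]

theorem degree_sum_C_mul_X_pow_lt {ι : Type*} (s : Finset ι) (b : ι → R) (e : ι → ℕ) {k : ℕ}
    (he : ∀ i ∈ s, e i < k) : degree (∑ i ∈ s, C (b i) * X ^ e i) < k :=
  (degree_sum_le _ _).trans_lt <| (Finset.sup_lt_iff <| WithBot.bot_lt_coe k).2 fun i hi =>
    (degree_C_mul_X_pow_le _ _).trans_lt <| WithBot.coe_lt_coe.2 (he i hi)

theorem degree_sum_range_C_mul_X_pow (b : ℕ → R) {k : ℕ} (hb : b k ≠ 0) :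
    degree (∑ i ∈ range (k + 1), C (b i) * X ^ i) = k := by
  rw [sum_range_succ, degree_add_eq_right_of_degree_lt] <;> rw [degree_C_mul_X_pow k hb]
  exact degree_sum_C_mul_X_pow_lt _ _ _ fun i hi => mem_range.1 hi

theorem leadingCoeff_sum_range_C_mul_X_pow (b : ℕ → R) {k : ℕ} (hb : b k ≠ 0) :
    leadingCoeff (∑ i ∈ range (k + 1), C (b i) * X ^ i) = b k := by
  rw [sum_range_succ, leadingCoeff_add_of_degree_lt, leadingCoeff_C_mul_X_pow]
  rw [degree_C_mul_X_pow k hb]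
  exact degree_sum_C_mul_X_pow_lt _ _ _ fun i hi => mem_range.1 hi

theorem tendsto_eval_sub_abs_eval_atTop {P R : ℝ[X]} (hP : 0 < P.degree)
    (hlead : 0 ≤ P.leadingCoeff) (hR : R.degree < P.degree) :
    Tendsto (fun x => eval x P - |eval x R|) atTop atTop := by
  have hsmall : (fun x => -|eval x R|) =o[atTop] fun x => eval x P :=
    (isLittleO_atTop_of_degree_lt R P hR).norm_left.neg_left
  refine ((hsmall.add_isEquivalent IsEquivalent.refl).symm.tendsto_atTop
    (P.tendsto_atTop_of_leadingCoeff_nonneg hP hlead)).congr fun x => ?_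
  simp only [Pi.add_apply]
  ring

end Polynomial

theorem integral_axis_eq_sum_axisMoment (a c : ℕ → ℝ) (s s' : Finset ℕ) (r t : ℝ) :
    ∫ τ in (0:ℝ)..1, τ / √(1 - τ ^ 2) *
        (t * ∑ j ∈ s', c j * (r * τ) ^ j + ∑ i ∈ s, a i * (r * τ) ^ i +
          r * τ * deriv (fun x => ∑ i ∈ s, a i * x ^ i) (r * τ)) =
      ∑ i ∈ s, a i * (i + 1) * axisMoment i * r ^ i + t * ∑ j ∈ s', c j * axisMoment j * r ^ j := by
  have hsum : ∀ (b : ℕ → ℝ) (s : Finset ℕ), IntervalIntegrable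
      (fun τ : ℝ => τ / √(1 - τ ^ 2) * ∑ i ∈ s, b i * (r * τ) ^ i) MeasureTheory.volume 0 1 :=
    fun b s => intervalIntegrable_div_sqrt_one_sub_sq.mul_continuousOn (by fun_prop)
  simp_rw [add_assoc, sum_mul_pow_add_mul_deriv, mul_add, mul_left_comm _ t]
  rw [integral_add ((hsum c s').const_mul t) (hsum _ s), integral_const_mul,
    integral_div_sqrt_one_sub_sq_mul_sum, integral_div_sqrt_one_sub_sq_mul_sum, add_comm]

/-- Polynomial initial-data criterion: if `f` has degree `m` with positive leading
coefficient, `g` has degree `n` and `m > n + 1`, then the axis value `U(t,0)` of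
John's formula tends to `+∞` as `|t| → ∞`; in particular it eventually dominates
`b - (1/2) ln|t|` for every constant `b`. -/
theorem polynomial_axis_growth (m n : ℕ) (a c : ℕ → ℝ)
    (ham : 0 < a m) (hmn : n + 1 < m)
    (f g : ℝ → ℝ)
    (hf : f = fun x : ℝ => ∑ i ∈ Finset.range (m + 1), a i * x ^ i)
    (hg : g = fun x : ℝ => ∑ j ∈ Finset.range (n + 1), c j * x ^ j)
    (U : ℝ → ℝ)
    (hU : U = fun t : ℝ => ∫ τ in (0:ℝ)..1,
      (τ / Real.sqrt (1 - τ ^ 2)) *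
        (t * g (|t| * τ) + f (|t| * τ) + |t| * τ * deriv f (|t| * τ))) :
    Tendsto U atTop atTop ∧ Tendsto U atBot atTop ∧
    ∀ b : ℝ, ∃ T : ℝ, ∀ t : ℝ, T ≤ |t| → b - (1 / 2) * Real.log |t| ≤ U t := by
  set P : ℝ[X] := ∑ i ∈ range (m + 1), C (a i * (i + 1) * axisMoment i) * X ^ i
  set R : ℝ[X] := ∑ j ∈ range (n + 1), C (c j * axisMoment j) * X ^ (j + 1)
  have hlead : 0 < a m * (m + 1) * axisMoment m := by have := axisMoment_pos m; positivity
  have hPdeg : P.degree = m := degree_sum_range_C_mul_X_pow _ hlead.ne'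
  have hRdeg : R.degree < m :=
    degree_sum_C_mul_X_pow_lt _ _ _ fun j hj => by have := mem_range.1 hj; omega
  have hbound : ∀ t, eval |t| P - |eval |t| R| ≤ U t := by
    intro t
    have hU : U t = eval |t| P + t * ∑ j ∈ range (n + 1), c j * axisMoment j * |t| ^ j := by
      rw [hU, hf, hg]
      simp only [P, eval_finsetSum, eval_mul, eval_C, eval_pow, eval_X]
      exact integral_axis_eq_sum_axisMoment a c _ _ |t| t
    have hR : eval |t| R = |t| * ∑ j ∈ range (n + 1), c j * axisMoment j * |t| ^ j := by
      simp only [R, eval_finsetSum, eval_mul, eval_C, eval_pow, eval_X, mul_sum]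
      congr! 1 with j
      ring
    rw [hU, hR, abs_mul, abs_abs, ← abs_mul]
    linarith [neg_abs_le (t * ∑ j ∈ range (n + 1), c j * axisMoment j * |t| ^ j)]
  have hlim : Tendsto (fun x => eval x P - |eval x R|) atTop atTop :=
    tendsto_eval_sub_abs_eval_atTop (by rw [hPdeg]; exact_mod_cast (by omega : 0 < m))
      (leadingCoeff_sum_range_C_mul_X_pow (fun i => a i * (i + 1) * axisMoment i) hlead.ne' ▸
        hlead.le)
      (hPdeg ▸ hRdeg)
  refine ⟨tendsto_atTop_mono hbound (hlim.comp tendsto_abs_atTop_atTop),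
    tendsto_atTop_mono hbound (hlim.comp tendsto_abs_atBot_atTop), fun b => ?_⟩
  obtain ⟨T, hT⟩ := eventually_atTop.1 (hlim.eventually_ge_atTop b)
  refine ⟨max T 1, fun t ht => ?_⟩
  have := Real.log_nonneg (le_of_max_le_right ht)
  linarith [hT |t| (le_of_max_le_left ht), hbound t]
end
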